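/- arXiv:2005.13168 — 3 statements merged into one kernel-verified Lean document; each statement's English description precedes it below -/
import Mathlib

section
/- Let γ : ℝ → ℝ² be a C¹, L-periodic (L > 0), unit-speed curve with unit normal n(s) = J(γ'(s)). Then there exists ε > 0 such that for every closed interval I ⊆ ℝ of length at most ε on which γ is injective and which satisfies the separation bound on I (i.e. for all s, t ∈ I and each σ ∈ {+1, −1}, ‖γ(t) − (γ(s) + σ·n(s))‖ ≥ 1), the map Γ(s, t) = γ(s) + t·n(s) is injective on I × (−1, 1). -/
/-!
Suppose `γ s + t • n s = γ s' + t' • n s'` with `|t|, |t'| < 1` and put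
`d = γ s' - γ s = t • n s - t' • n s'`. For a unit normal, the separation bound at `s` says
exactly `2 |⟪d, n s⟫| ≤ ‖d‖²`, and likewise at `s'`. Expanding
`‖d‖² = t ⟪d, n s⟫ - t' ⟪d, n s'⟫` then gives `‖d‖² ≤ (|t| + |t'|) / 2 * ‖d‖²`, so `d = 0`;
injectivity of `γ` gives `s = s'`, and then `t = t'`.
-/

open Set
open scoped InnerProductSpace

noncomputable section

/-- Rotation by π/2 in the plane: `J (x, y) = (-y, x)`. -/
def J (v : EuclideanSpace ℝ (Fin 2)) : EuclideanSpace ℝ (Fin 2) := WithLp.toLp 2 ![-(v 1), v 0]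

lemma norm_J (v : EuclideanSpace ℝ (Fin 2)) : ‖J v‖ = ‖v‖ := by
  simp [EuclideanSpace.norm_eq, J, Fin.sum_univ_two, add_comm]

section Ribbon

variable {E : Type*} [NormedAddCommGroup E] [InnerProductSpace ℝ E]

lemma two_mul_abs_inner_le_norm_sq {d u : E} (hu : ‖u‖ = 1)
    (hsub : 1 ≤ ‖d - u‖) (hadd : 1 ≤ ‖d + u‖) : 2 * |⟪d, u⟫_ℝ| ≤ ‖d‖ ^ 2 := by
  have hsub_sq : 1 ≤ ‖d - u‖ ^ 2 := one_le_pow₀ hsub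
  have hadd_sq : 1 ≤ ‖d + u‖ ^ 2 := one_le_pow₀ hadd
  rw [norm_sub_sq_real, hu] at hsub_sq
  rw [norm_add_sq_real, hu] at hadd_sq
  cases abs_cases ⟪d, u⟫_ℝ <;> linarith

lemma eq_zero_of_two_mul_abs_inner_le_norm_sq {d u v : E} {t t' : ℝ}
    (ht : |t| < 1) (ht' : |t'| < 1) (hd : d = t • u - t' • v)
    (hu : 2 * |⟪d, u⟫_ℝ| ≤ ‖d‖ ^ 2) (hv : 2 * |⟪d, v⟫_ℝ| ≤ ‖d‖ ^ 2) : d = 0 := by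
  have hexpand : ‖d‖ ^ 2 = t * ⟪d, u⟫_ℝ - t' * ⟪d, v⟫_ℝ := by
    rw [← real_inner_self_eq_norm_sq]
    nth_rewrite 2 [hd]
    rw [inner_sub_right, real_inner_smul_right, real_inner_smul_right]
  have hbound : ‖d‖ ^ 2 ≤ |t| * |⟪d, u⟫_ℝ| + |t'| * |⟪d, v⟫_ℝ| := by
    rw [hexpand, ← abs_mul, ← abs_mul]
    exact (le_abs_self _).trans (abs_sub _ _)
  have hnonpos : ‖d‖ ^ 2 ≤ 0 := by
    nlinarith [abs_nonneg t, abs_nonneg t', mul_le_mul_of_nonneg_left hu (abs_nonneg t),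
      mul_le_mul_of_nonneg_left hv (abs_nonneg t')]
  exact norm_eq_zero.mp (pow_eq_zero_iff two_ne_zero |>.mp (hnonpos.antisymm (by positivity)))

theorem injOn_ribbon {ι : Type*} {γ n : ι → E} {S : Set ι} (hn : ∀ s, ‖n s‖ = 1)
    (hinj : InjOn γ S)
    (hsep : ∀ s ∈ S, ∀ t ∈ S, ∀ σ : ℝ, (σ = 1 ∨ σ = -1) → 1 ≤ ‖γ t - (γ s + σ • n s)‖) :
    InjOn (fun p : ι × ℝ => γ p.1 + p.2 • n p.1) (S ×ˢ Ioo (-1) 1) := by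
  rintro ⟨s, t⟩ ⟨hs, ht⟩ ⟨s', t'⟩ ⟨hs', ht'⟩ heq
  dsimp only at hs ht hs' ht' heq
  have inner_bound : ∀ s ∈ S, ∀ s' ∈ S, 2 * |⟪γ s' - γ s, n s⟫_ℝ| ≤ ‖γ s' - γ s‖ ^ 2 :=
    fun s hs s' hs' => two_mul_abs_inner_le_norm_sq (hn s)
      ((hsep s hs s' hs' 1 (.inl rfl)).trans_eq (by congr 1; module))
      ((hsep s hs s' hs' (-1) (.inr rfl)).trans_eq (by congr 1; module))
  have inner_bound' : 2 * |⟪γ s' - γ s, n s'⟫_ℝ| ≤ ‖γ s' - γ s‖ ^ 2 := by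
    have h := inner_bound s' hs' s hs
    rwa [← neg_sub, inner_neg_left, abs_neg, norm_neg] at h
  have hd : γ s' - γ s = t • n s - t' • n s' := by
    rw [sub_eq_sub_iff_add_eq_add, ← heq, add_comm]
  have hγ : γ s' = γ s := sub_eq_zero.mp <| eq_zero_of_two_mul_abs_inner_le_norm_sq
    (abs_lt.mpr ht) (abs_lt.mpr ht') hd (inner_bound s hs s' hs') inner_bound'
  obtain rfl : s' = s := hinj hs' hs hγ
  have hn0 : n s' ≠ 0 := norm_ne_zero_iff.mp (by simp [hn])
  rw [smul_left_injective ℝ hn0 (add_left_cancel heq)]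

end Ribbon

theorem local_ribbon_injective_general
    (γ : ℝ → EuclideanSpace ℝ (Fin 2))
    (hunit : ∀ s, ‖deriv γ s‖ = 1) :
    ∃ ε > 0, ∀ a b : ℝ, a ≤ b → b - a ≤ ε →
      Set.InjOn γ (Set.Icc a b) →
      (∀ s ∈ Set.Icc a b, ∀ t ∈ Set.Icc a b, ∀ σ : ℝ, (σ = 1 ∨ σ = -1) →
        1 ≤ ‖γ t - (γ s + σ • J (deriv γ s))‖) →
      Set.InjOn (fun p : ℝ × ℝ => γ p.1 + p.2 • J (deriv γ p.1))
        (Set.Icc a b ×ˢ Set.Ioo (-1 : ℝ) 1) :=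
  ⟨1, one_pos, fun _ _ _ _ hinj hsep =>
    injOn_ribbon (fun s => (norm_J _).trans (hunit s)) hinj hsep⟩

/-- **Local ribbon property** (Proposition 2.3).  For a C¹, `L`-periodic, unit-speed
plane curve `γ` with unit normal `n s = J (γ' s)`, there is `ε > 0` such that for every
closed interval `I` of length at most `ε` on which `γ` is injective and satisfies the
separation bound, the ribbon map `Γ (s, t) = γ s + t • n s` is injective on `I × (-1, 1)`. -/
theorem local_ribbon_injective
    (γ : ℝ → EuclideanSpace ℝ (Fin 2)) (L : ℝ) (hL : 0 < L)
    (hC1 : ContDiff ℝ 1 γ) (hper : Function.Periodic γ L)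
    (hunit : ∀ s, ‖deriv γ s‖ = 1) :
    ∃ ε > 0, ∀ a b : ℝ, a ≤ b → b - a ≤ ε →
      Set.InjOn γ (Set.Icc a b) →
      (∀ s ∈ Set.Icc a b, ∀ t ∈ Set.Icc a b, ∀ σ : ℝ, (σ = 1 ∨ σ = -1) →
        1 ≤ ‖γ t - (γ s + σ • J (deriv γ s))‖) →
      Set.InjOn (fun p : ℝ × ℝ => γ p.1 + p.2 • J (deriv γ p.1))
        (Set.Icc a b ×ˢ Set.Ioo (-1 : ℝ) 1) :=
  local_ribbon_injective_general γ hunit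

end
end

section
/- Let γ : [0,1] → ℝ² be a closed curve and let B₁, B₂ be open balls of radius 1 whose centres are at distance at least 2 from each other (so the balls are disjoint). If each of B₁ and B₂ is contained in some bounded complementary component of γ, then the length of γ is at least 4 + 2π. -/
/-!
If a ball `B(c, ρ)` lies in a bounded component of the complement of `K`, then for every unit
vector `u` the set `K` reaches beyond the ball in direction `u`: otherwise the half-space on which
`⟪u, ·⟫` exceeds its bound on `K` would be a connected unbounded subset of that component. With
two such balls, the width of `K` in direction `u` is at least `2ρ + |⟪u, c₁ - c₂⟫|`, and a closed
polygon whose vertices are `ε`-dense in `K` has a projection of total variation at least twice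
that width, minus `4ε`. Integrating over `u = (cos θ, sin θ)` with the Cauchy–Crofton formula
`∫₀^{2π} |⟪u, v⟫| dθ = 4‖v‖` bounds the length of such a polygon below by
`2π(ρ - ε) + 2‖c₁ - c₂‖`. Inscribed polygons of the curve are no longer than the curve, and
`ρ = 1`, `‖c₁ - c₂‖ ≥ 2`, `ε → 0` give `2π + 4`.
-/

open Real intervalIntegral Metric Bornology Set
open scoped RealInnerProductSpace

def EnclosesBall {E : Type*} [NormedAddCommGroup E] (K : Set E) (c : E) (ρ : ℝ) : Prop :=
  ∃ p, IsBounded (connectedComponentIn Kᶜ p) ∧ ball c ρ ⊆ connectedComponentIn Kᶜ p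

theorem two_mul_dist_le_sum_dist_of_loop {α : Type*} [PseudoMetricSpace α] (x : ℕ → α)
    {N j k : ℕ} (hx : x 0 = x N) (hj : j ≤ N) (hk : k ≤ N) :
    2 * dist (x j) (x k) ≤ ∑ i ∈ Finset.range N, dist (x i) (x (i + 1)) := by
  wlog hjk : j ≤ k generalizing j k
  · rw [dist_comm]
    exact this hk hj (le_of_not_ge hjk)
  set f := fun i => dist (x i) (x (i + 1))
  have e₁ := Finset.sum_Ico_consecutive f (Nat.zero_le j) hjk
  have e₂ := Finset.sum_Ico_consecutive f (Nat.zero_le k) hk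
  have h₀ := dist_le_Ico_sum_dist x (Nat.zero_le j)
  have h₁ := dist_le_Ico_sum_dist x hjk
  have h₂ := dist_le_Ico_sum_dist x hk
  rw [← hx] at h₂
  rw [Finset.range_eq_Ico]
  linarith [dist_triangle (x j) (x 0) (x k), dist_comm (x 0) (x j), dist_comm (x 0) (x k)]

section InnerProductSpace

variable {E : Type*} [NormedAddCommGroup E] [InnerProductSpace ℝ E]

theorem EnclosesBall.inner_add_le {K : Set E} {c u : E} {ρ r : ℝ} (h : EnclosesBall K c ρ)
    (hρ : 0 < ρ) (hu : ‖u‖ = 1) (hK : ∀ x ∈ K, ⟪u, x⟫ ≤ r) : ⟪u, c⟫ + ρ ≤ r := by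
  obtain ⟨p, hbdd, hball⟩ := h
  by_contra! hr
  set H := {x : E | r < ⟪u, x⟫}
  have hHK : H ⊆ Kᶜ := fun x hx hxK => (hK x hxK).not_gt hx
  obtain ⟨t, ht, htρ⟩ := exists_between (max_lt (sub_lt_iff_lt_add'.2 hr) hρ)
  have hq : c + t • u ∈ ball c ρ := by
    rw [mem_ball, dist_self_add_left, norm_smul, hu, mul_one, Real.norm_eq_abs,
      abs_of_nonneg ((le_max_right _ _).trans ht.le)]
    exact htρ
  have hqH : c + t • u ∈ H := by
    change r < ⟪u, c + t • u⟫
    rw [inner_add_right, real_inner_smul_right, real_inner_self_eq_norm_sq, hu]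
    linarith [le_max_left (r - ⟪u, c⟫) 0]
  have hHsub : H ⊆ connectedComponentIn Kᶜ p := by
    rw [connectedComponentIn_eq (hball hq)]
    exact (convex_halfSpace_gt (innerₛₗ ℝ u).isLinear r).isPreconnected.subset_connectedComponentIn
      hqH hHK
  obtain ⟨M, hM⟩ := isBounded_iff_forall_norm_le.1 (hbdd.subset hHsub)
  have hfar : (max r M + 1) • u ∈ H := by
    change r < ⟪u, (max r M + 1) • u⟫
    rw [real_inner_smul_right, real_inner_self_eq_norm_sq, hu]
    linarith [le_max_left r M]
  have hfar_le := hM _ hfar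
  rw [norm_smul, hu, mul_one, Real.norm_eq_abs] at hfar_le
  linarith [le_abs_self (max r M + 1), le_max_right r M]

theorem EnclosesBall.le_inner_sub {K : Set E} {c u : E} {ρ r : ℝ} (h : EnclosesBall K c ρ)
    (hρ : 0 < ρ) (hu : ‖u‖ = 1) (hK : ∀ x ∈ K, r ≤ ⟪u, x⟫) : r ≤ ⟪u, c⟫ - ρ := by
  have := h.inner_add_le (u := -u) (r := -r) hρ (by rwa [norm_neg]) fun x hx => by
    rw [inner_neg_left]
    linarith [hK x hx]
  rw [inner_neg_left] at this
  linarith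

theorem two_mul_add_abs_inner_sub_le_of_enclosesBall {K : Set E} {c₁ c₂ u : E} {ρ a b : ℝ}
    (h₁ : EnclosesBall K c₁ ρ) (h₂ : EnclosesBall K c₂ ρ) (hρ : 0 < ρ) (hu : ‖u‖ = 1)
    (hK : ∀ x ∈ K, b ≤ ⟪u, x⟫ ∧ ⟪u, x⟫ ≤ a) : 2 * ρ + |⟪u, c₁ - c₂⟫| ≤ a - b := by
  have ha₁ := h₁.inner_add_le hρ hu fun x hx => (hK x hx).2
  have ha₂ := h₂.inner_add_le hρ hu fun x hx => (hK x hx).2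
  have hb₁ := h₁.le_inner_sub hρ hu fun x hx => (hK x hx).1
  have hb₂ := h₂.le_inner_sub hρ hu fun x hx => (hK x hx).1
  rw [inner_sub_right]
  cases abs_cases (⟪u, c₁⟫ - ⟪u, c₂⟫) <;> linarith

theorem le_sum_abs_inner_sub_of_enclosesBall {K : Set E} {c₁ c₂ u : E} {ρ ε : ℝ} {x : ℕ → E} {N : ℕ}
    (h₁ : EnclosesBall K c₁ ρ) (h₂ : EnclosesBall K c₂ ρ) (hρ : 0 < ρ) (hu : ‖u‖ = 1)
    (hx : x 0 = x N) (hnet : ∀ y ∈ K, ∃ i ≤ N, dist y (x i) ≤ ε) :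
    2 * (2 * ρ + |⟪u, c₁ - c₂⟫| - 2 * ε) ≤ ∑ i ∈ Finset.range N, |⟪u, x (i + 1) - x i⟫| := by
  set g := fun i => ⟪u, x i⟫
  obtain ⟨j, hj, hjmax⟩ := (Finset.range (N + 1)).exists_max_image g ⟨0, by simp⟩
  obtain ⟨k, hk, hkmin⟩ := (Finset.range (N + 1)).exists_min_image g ⟨0, by simp⟩
  have hwidth := two_mul_add_abs_inner_sub_le_of_enclosesBall (a := g j + ε) (b := g k - ε)
    h₁ h₂ hρ hu fun y hy => by
      obtain ⟨i, hi, hyi⟩ := hnet y hy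
      have hyi' : |⟪u, y⟫ - g i| ≤ ε := by
        rw [← inner_sub_right]
        calc |⟪u, y - x i⟫| ≤ ‖u‖ * ‖y - x i‖ := abs_real_inner_le_norm u (y - x i)
          _ ≤ ε := by rwa [hu, one_mul, ← dist_eq_norm]
      have hiN : i ∈ Finset.range (N + 1) := Finset.mem_range_succ_iff.2 hi
      have := abs_le.1 hyi'
      constructor <;> linarith [hjmax i hiN, hkmin i hiN]
  have hloop := two_mul_dist_le_sum_dist_of_loop g (congrArg (inner ℝ u) hx)
    (Finset.mem_range_succ_iff.1 hj) (Finset.mem_range_succ_iff.1 hk)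
  have hsum : ∑ i ∈ Finset.range N, dist (g i) (g (i + 1))
      = ∑ i ∈ Finset.range N, |⟪u, x (i + 1) - x i⟫| :=
    Finset.sum_congr rfl fun i _ => by rw [dist_comm, Real.dist_eq, inner_sub_right]
  linarith [le_abs_self (g j - g k), Real.dist_eq (g j) (g k)]

end InnerProductSpace

noncomputable def unitVec (θ : ℝ) : EuclideanSpace ℝ (Fin 2) := !₂[cos θ, sin θ]

theorem norm_unitVec (θ : ℝ) : ‖unitVec θ‖ = 1 := by
  simp [unitVec, EuclideanSpace.norm_eq, Fin.sum_univ_two]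

theorem inner_unitVec (θ : ℝ) (v : EuclideanSpace ℝ (Fin 2)) :
    ⟪unitVec θ, v⟫ = cos θ * v 0 + sin θ * v 1 := by
  simp only [unitVec, EuclideanSpace.inner_eq_star_dotProduct, dotProduct, Pi.star_apply,
    star_trivial, Fin.sum_univ_two, Matrix.cons_val_zero, Matrix.cons_val_one]
  ring

theorem exists_inner_unitVec_eq_norm_mul_cos (v : EuclideanSpace ℝ (Fin 2)) :
    ∃ φ, ∀ θ, ⟪unitVec θ, v⟫ = ‖v‖ * cos (θ - φ) := by
  set z : ℂ := ⟨v 0, v 1⟩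
  have hz : ‖z‖ = ‖v‖ := by
    simp [z, Complex.norm_def, Complex.normSq_mk, EuclideanSpace.norm_eq, Fin.sum_univ_two, ← sq]
  refine ⟨z.arg, fun θ => ?_⟩
  have hre : ‖z‖ * cos z.arg = v 0 := Complex.norm_mul_cos_arg z
  have him : ‖z‖ * sin z.arg = v 1 := Complex.norm_mul_sin_arg z
  rw [inner_unitVec, cos_sub, ← hz, ← hre, ← him]
  ring

theorem integral_abs_cos_sub (φ : ℝ) : ∫ θ in 0..2 * π, |cos (θ - φ)| = 4 := by
  have hper : Function.Periodic (fun θ => |cos (θ - φ)|) π := fun θ => by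
    simp [add_sub_right_comm, cos_add_pi]
  have hint : ∀ a b, IntervalIntegrable (fun θ => |cos (θ - φ)|) MeasureTheory.volume a b :=
    fun a b => (by fun_prop : Continuous fun θ => |cos (θ - φ)|).intervalIntegrable a b
  have hhalf : ∫ θ in (-(π / 2))..(π / 2), |cos θ| = 2 := by
    rw [integral_congr (g := cos) fun θ hθ => abs_of_nonneg (cos_nonneg_of_mem_Icc ?_),
      integral_cos]
    · norm_num
    · rwa [uIcc_of_le (by linarith [pi_pos])] at hθ
  calc ∫ θ in 0..2 * π, |cos (θ - φ)|
      = ∫ θ in (0)..(0 + (2 : ℤ) • π), |cos (θ - φ)| := by norm_num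
    _ = 2 * ∫ θ in (φ - π / 2)..(φ - π / 2 + π), |cos (θ - φ)| := by
      rw [hper.intervalIntegral_add_zsmul_eq 2 0 hint, hper.intervalIntegral_add_eq 0 (φ - π / 2)]
      norm_num
    _ = 4 := by
      rw [integral_comp_sub_right (fun θ => |cos θ|), show φ - π / 2 - φ = -(π / 2) by ring,
        show φ - π / 2 + π - φ = π / 2 by ring, hhalf]
      norm_num

theorem continuous_abs_inner_unitVec (v : EuclideanSpace ℝ (Fin 2)) :
    Continuous fun θ => |⟪unitVec θ, v⟫| := by
  obtain ⟨φ, hφ⟩ := exists_inner_unitVec_eq_norm_mul_cos v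
  simp_rw [hφ]
  fun_prop

theorem integral_abs_inner_unitVec (v : EuclideanSpace ℝ (Fin 2)) :
    ∫ θ in 0..2 * π, |⟪unitVec θ, v⟫| = 4 * ‖v‖ := by
  obtain ⟨φ, hφ⟩ := exists_inner_unitVec_eq_norm_mul_cos v
  simp_rw [hφ, abs_mul, abs_norm]
  rw [integral_const_mul, integral_abs_cos_sub, mul_comm]

theorem le_sum_norm_sub_of_enclosesBall {K : Set (EuclideanSpace ℝ (Fin 2))}
    {c₁ c₂ : EuclideanSpace ℝ (Fin 2)} {ρ ε : ℝ} {x : ℕ → EuclideanSpace ℝ (Fin 2)} {N : ℕ}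
    (h₁ : EnclosesBall K c₁ ρ) (h₂ : EnclosesBall K c₂ ρ) (hρ : 0 < ρ)
    (hx : x 0 = x N) (hnet : ∀ y ∈ K, ∃ i ≤ N, dist y (x i) ≤ ε) :
    2 * π * (ρ - ε) + 2 * ‖c₁ - c₂‖ ≤ ∑ i ∈ Finset.range N, ‖x (i + 1) - x i‖ := by
  have hcont := continuous_abs_inner_unitVec
  have hpointwise : ∀ θ ∈ Icc 0 (2 * π), 4 * (ρ - ε) + 2 * |⟪unitVec θ, c₁ - c₂⟫|
      ≤ ∑ i ∈ Finset.range N, |⟪unitVec θ, x (i + 1) - x i⟫| := fun θ _ => by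
    linarith [le_sum_abs_inner_sub_of_enclosesBall h₁ h₂ hρ (norm_unitVec θ) hx hnet]
  have hint := integral_mono_on (f := fun θ => 4 * (ρ - ε) + 2 * |⟪unitVec θ, c₁ - c₂⟫|)
    (g := fun θ => ∑ i ∈ Finset.range N, |⟪unitVec θ, x (i + 1) - x i⟫|) two_pi_pos.le
    ((continuous_const.add ((hcont (c₁ - c₂)).const_mul 2)).intervalIntegrable
      (μ := MeasureTheory.volume) _ _)
    ((continuous_finsetSum _ fun i _ => hcont (x (i + 1) - x i)).intervalIntegrable _ _)
    hpointwise
  rw [integral_add intervalIntegrable_const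
      (((hcont _).const_mul 2).intervalIntegrable (μ := MeasureTheory.volume) _ _),
    integral_const, integral_const_mul, integral_abs_inner_unitVec,
    integral_finsetSum fun i _ => (hcont _).intervalIntegrable _ _] at hint
  simp only [integral_abs_inner_unitVec, ← Finset.mul_sum, smul_eq_mul, sub_zero] at hint
  linarith

theorem exists_pos_forall_exists_dist_apply_div_lt {α : Type*} [PseudoMetricSpace α]
    {γ : ℝ → α} (hγ : ContinuousOn γ (Icc 0 1)) {ε : ℝ} (hε : 0 < ε) :
    ∃ N : ℕ, 0 < N ∧ ∀ t ∈ Icc (0 : ℝ) 1, ∃ i ≤ N, dist (γ t) (γ (i / N)) < ε := by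
  obtain ⟨δ, hδ, hγδ⟩ := Metric.uniformContinuousOn_iff.1
    (isCompact_Icc.uniformContinuousOn_of_continuous hγ) ε hε
  obtain ⟨n, hn⟩ := exists_nat_one_div_lt hδ
  set N := n + 1
  have hN : (0 : ℝ) < N := by positivity
  refine ⟨N, n.succ_pos, fun t ht => ⟨⌊t * N⌋₊, ?_, hγδ t ht _ ⟨by positivity, ?_⟩ ?_⟩⟩
  · exact Nat.floor_le_of_le (by nlinarith [ht.2])
  · rw [div_le_one hN]
    exact (Nat.floor_le (by nlinarith [ht.1])).trans (by nlinarith [ht.2])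
  · have hfloor := Nat.floor_le (a := t * N) (by nlinarith [ht.1])
    have hsub : t - ⌊t * N⌋₊ / N = (t * N - ⌊t * N⌋₊) / N := by field_simp
    rw [Real.dist_eq, hsub, abs_of_nonneg (div_nonneg (sub_nonneg.2 hfloor) hN.le)]
    calc _ < 1 / (N : ℝ) := div_lt_div_of_pos_right (by linarith [Nat.lt_floor_add_one (t * N)]) hN
      _ < δ := by exact_mod_cast hn

theorem sum_edist_apply_div_le_eVariationOn {α : Type*} [PseudoEMetricSpace α] (γ : ℝ → α)
    (N : ℕ) :
    ∑ i ∈ Finset.range N, edist (γ ((i + 1 : ℕ) / N)) (γ (i / N)) ≤ eVariationOn γ (Icc 0 1) :=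
  eVariationOn.sum_le_of_monotoneOn_Iic
    (fun _ _ _ _ hij => div_le_div_of_nonneg_right (Nat.cast_le.2 hij) N.cast_nonneg)
    fun _ hi => ⟨by positivity, div_le_one_of_le₀ (Nat.cast_le.2 hi) N.cast_nonneg⟩

/-- **Two-disk lower bound** (Section 6).  If a closed plane curve has two open unit
balls, with centres at distance at least `2`, each contained in some bounded
complementary component, then its length is at least `4 + 2π`. -/
theorem length_ge_of_two_unit_balls
    (γ : ℝ → EuclideanSpace ℝ (Fin 2))
    (hγ : ContinuousOn γ (Set.Icc 0 1)) (hloop : γ 0 = γ 1)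
    (K : Set (EuclideanSpace ℝ (Fin 2))) (hK : K = γ '' Set.Icc 0 1)
    (c₁ c₂ : EuclideanSpace ℝ (Fin 2)) (hdist : 2 ≤ dist c₁ c₂)
    (h₁ : ∃ p ∉ K, Bornology.IsBounded (connectedComponentIn Kᶜ p) ∧
      Metric.ball c₁ 1 ⊆ connectedComponentIn Kᶜ p)
    (h₂ : ∃ p ∉ K, Bornology.IsBounded (connectedComponentIn Kᶜ p) ∧
      Metric.ball c₂ 1 ⊆ connectedComponentIn Kᶜ p) :
    ENNReal.ofReal (4 + 2 * Real.pi) ≤ eVariationOn γ (Set.Icc 0 1) := by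
  subst hK
  obtain ⟨p₁, -, h₁⟩ := h₁
  obtain ⟨p₂, -, h₂⟩ := h₂
  rcases eq_or_ne (eVariationOn γ (Icc 0 1)) ⊤ with hL | hL
  · simp [hL]
  rw [ENNReal.ofReal_le_iff_le_toReal hL]
  refine le_of_forall_pos_le_add fun ε hε => ?_
  obtain ⟨N, hN, hnet⟩ := exists_pos_forall_exists_dist_apply_div_lt hγ (div_pos hε two_pi_pos)
  have hdense : ∀ y ∈ γ '' Icc 0 1, ∃ i ≤ N, dist y (γ (i / N)) ≤ ε / (2 * π) := by
    rintro _ ⟨t, ht, rfl⟩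
    obtain ⟨i, hi, hti⟩ := hnet t ht
    exact ⟨i, hi, hti.le⟩
  have hpolygon := le_sum_norm_sub_of_enclosesBall ⟨p₁, h₁⟩ ⟨p₂, h₂⟩ one_pos
    (by simp [hN.ne', hloop]) hdense
  have hvar : ∑ i ∈ Finset.range N, ‖γ ((i + 1 : ℕ) / N) - γ (i / N)‖
      ≤ (eVariationOn γ (Icc 0 1)).toReal := by
    rw [← ENNReal.ofReal_le_iff_le_toReal hL,
      ENNReal.ofReal_sum_of_nonneg fun i _ => norm_nonneg _]
    simpa only [edist_dist, dist_eq_norm] using sum_edist_apply_div_le_eVariationOn γ N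
  have hε' : 2 * π * (1 - ε / (2 * π)) = 2 * π - ε := by field_simp
  rw [dist_eq_norm] at hdist
  push_cast at hpolygon hvar
  linarith
end

section
/- Let σ : [0,1] → ℝ² be a continuous curve with ‖σ(t)‖ ≥ 1 for all t ∈ [0,1]. Then the length of σ (its total variation) is at least the angle between σ(0) and σ(1), i.e. at least arccos(⟨σ(0)/‖σ(0)‖, σ(1)/‖σ(1)‖⟩). In particular, a curve joining two points of the unit circle while remaining outside its open disk is at least as long as the shorter arc of the unit circle between those points. -/
open scoped ENNReal RealInnerProductSpace
open Set Filter Topology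

/-!
Let `g t` be the angle between `σ 0` and `σ t`. By the triangle inequality for angles,
`|g s - g t|` is at most the angle `θ` between `σ s` and `σ t`, and a chord joining two points
outside the unit disk that subtends the angle `θ` has length at least `2 sin (θ / 2) ≥ θ - θ ^ 2`.
On a partition so fine that `g` moves by less than `η` on each piece, the inscribed polygon
therefore has length at least `(1 - η) (g 1 - g 0)`; let `η → 0`.
-/

theorem exists_uniform_partition_dist_lt {F : Type*} [PseudoMetricSpace F] {g : ℝ → F}
    {a b : ℝ} (hab : a ≤ b) (hg : ContinuousOn g (Icc a b)) {η : ℝ} (hη : 0 < η) :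
    ∃ (n : ℕ) (u : ℕ → ℝ), MonotoneOn u (Iic n) ∧ (∀ i ≤ n, u i ∈ Icc a b) ∧
      u 0 = a ∧ u n = b ∧ ∀ i < n, dist (g (u (i + 1))) (g (u i)) < η := by
  obtain ⟨δ, hδ, hgδ⟩ :=
    Metric.uniformContinuousOn_iff.1 (isCompact_Icc.uniformContinuousOn_of_continuous hg) η hη
  obtain ⟨n, hn⟩ := exists_nat_gt ((b - a) / δ)
  have hn0 : (0 : ℝ) < n := lt_of_le_of_lt (div_nonneg (sub_nonneg.2 hab) hδ.le) hn
  set u : ℕ → ℝ := fun i => a + i * ((b - a) / n)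
  have hmono : Monotone u := fun i j hij => by
    simp only [u]; gcongr
  have hmem : ∀ i ≤ n, u i ∈ Icc a b := fun i hi => by
    have : (i : ℝ) * ((b - a) / n) ≤ b - a := by
      rw [mul_div_assoc', div_le_iff₀ hn0, mul_comm]
      exact mul_le_mul_of_nonneg_left (by exact_mod_cast hi) (sub_nonneg.2 hab)
    exact ⟨le_add_of_nonneg_right (by positivity), by simp only [u]; linarith⟩
  refine ⟨n, u, hmono.monotoneOn _, hmem, by simp [u], by simp only [u]; field_simp; ring,
    fun i hi => ?_⟩
  refine hgδ _ (hmem _ hi) _ (hmem _ hi.le) ?_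
  have : u (i + 1) - u i = (b - a) / n := by simp only [u]; push_cast; ring
  rwa [Real.dist_eq, this, abs_of_nonneg (div_nonneg (sub_nonneg.2 hab) hn0.le),
    div_lt_iff₀ hn0, mul_comm, ← div_lt_iff₀ hδ]

theorem edist_le_eVariationOn_of_dist_le_dist_add_mul_sq {E F : Type*} [PseudoMetricSpace E]
    [PseudoMetricSpace F] {f : ℝ → E} {g : ℝ → F} {a b C : ℝ} (hab : a ≤ b) (hC : 0 ≤ C)
    (hg : ContinuousOn g (Icc a b))
    (hfg : ∀ s ∈ Icc a b, ∀ t ∈ Icc a b,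
      dist (g s) (g t) ≤ dist (f s) (f t) + C * dist (g s) (g t) ^ 2) :
    edist (g a) (g b) ≤ eVariationOn f (Icc a b) := by
  have key : ∀ η > 0,
      ENNReal.ofReal ((1 - C * η) * dist (g a) (g b)) ≤ eVariationOn f (Icc a b) := by
    intro η hη
    obtain ⟨n, u, hu, hmem, hu0, hun, hstep⟩ := exists_uniform_partition_dist_lt hab hg hη
    have hterm : ∀ i ∈ Finset.range n,
        (1 - C * η) * dist (g (u (i + 1))) (g (u i)) ≤ dist (f (u (i + 1))) (f (u i)) := by
      intro i hi
      rw [Finset.mem_range] at hi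
      set d := dist (g (u (i + 1))) (g (u i))
      have hd : C * d ^ 2 ≤ C * η * d := by
        rw [sq, mul_assoc]
        exact mul_le_mul_of_nonneg_left
          (mul_le_mul_of_nonneg_right (hstep i hi).le dist_nonneg) hC
      linarith [hfg (u (i + 1)) (hmem (i + 1) hi) (u i) (hmem i hi.le)]
    have htel : dist (g a) (g b) ≤ ∑ i ∈ Finset.range n, dist (g (u (i + 1))) (g (u i)) := by
      simpa only [hu0, hun, dist_comm] using dist_le_range_sum_dist (fun i => g (u i)) n
    rcases le_total (C * η) 1 with h | h
    · calc ENNReal.ofReal ((1 - C * η) * dist (g a) (g b))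
          ≤ ENNReal.ofReal (∑ i ∈ Finset.range n, dist (f (u (i + 1))) (f (u i))) := by
            gcongr
            calc (1 - C * η) * dist (g a) (g b)
                ≤ (1 - C * η) * ∑ i ∈ Finset.range n, dist (g (u (i + 1))) (g (u i)) := by
                  gcongr
              _ ≤ _ := by rw [Finset.mul_sum]; exact Finset.sum_le_sum hterm
        _ = ∑ i ∈ Finset.range n, edist (f (u (i + 1))) (f (u i)) := by
            rw [ENNReal.ofReal_sum_of_nonneg fun _ _ => dist_nonneg]
            simp only [edist_dist]
        _ ≤ eVariationOn f (Icc a b) := eVariationOn.sum_le_of_monotoneOn_Iic hu hmem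
    · rw [ENNReal.ofReal_of_nonpos (mul_nonpos_of_nonpos_of_nonneg (by linarith) dist_nonneg)]
      exact zero_le
  have hlim : Tendsto (fun η => ENNReal.ofReal ((1 - C * η) * dist (g a) (g b))) (𝓝[>] 0)
      (𝓝 (ENNReal.ofReal (dist (g a) (g b)))) := by
    refine ENNReal.tendsto_ofReal (tendsto_nhdsWithin_of_tendsto_nhds ?_)
    simpa using ((continuous_const.sub (continuous_const.mul continuous_id)).mul
      continuous_const).tendsto (0 : ℝ) (f := fun η => (1 - C * η) * dist (g a) (g b))
  rw [edist_dist]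
  exact le_of_tendsto hlim (eventually_nhdsWithin_of_forall fun η hη => key η hη)

open Real InnerProductGeometry

section Angle

variable {V : Type*} [NormedAddCommGroup V] [InnerProductSpace ℝ V]

theorem arccos_inner_inv_norm_smul (x y : V) :
    arccos ⟪‖x‖⁻¹ • x, ‖y‖⁻¹ • y⟫ = angle x y := by
  rw [angle, real_inner_smul_left, real_inner_smul_right, div_eq_inv_mul, mul_inv, mul_assoc]

theorem abs_angle_sub_angle_le (x y z : V) : |angle x y - angle x z| ≤ angle y z := by
  rw [abs_sub_le_iff]
  constructor
  · linarith [angle_le_angle_add_angle x z y, angle_comm z y]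
  · linarith [angle_le_angle_add_angle x y z]

theorem two_mul_sin_angle_div_two_le_norm_sub {x y : V} (hx : 1 ≤ ‖x‖) (hy : 1 ≤ ‖y‖) :
    2 * sin (angle x y / 2) ≤ ‖x - y‖ := by
  have hsin : 0 ≤ sin (angle x y / 2) :=
    sin_nonneg_of_nonneg_of_le_pi (by linarith [angle_nonneg x y])
      (by linarith [angle_le_pi x y, pi_pos])
  have hcos : cos (angle x y) = 1 - 2 * sin (angle x y / 2) ^ 2 := by
    have h := cos_two_mul' (angle x y / 2)
    rw [mul_div_cancel₀ _ two_ne_zero] at h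
    linarith [sin_sq_add_cos_sq (angle x y / 2)]
  refine abs_le_of_sq_le_sq' ?_ (norm_nonneg _) |>.2
  -- law of cosines: `‖x - y‖ ^ 2 = (‖x‖ - ‖y‖) ^ 2 + 4 ‖x‖ ‖y‖ sin (θ / 2) ^ 2`
  rw [sq ‖x - y‖, norm_sub_sq_eq_norm_sq_add_norm_sq_sub_two_mul_norm_mul_norm_mul_cos_angle,
    hcos]
  nlinarith [sq_nonneg (‖x‖ - ‖y‖), mul_le_mul hx hy zero_le_one (by linarith)]

theorem sub_sq_le_two_mul_sin_half {d : ℝ} (hd : 0 ≤ d) : d - d ^ 2 ≤ 2 * sin (d / 2) := by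
  rcases le_total d 2 with h2 | h2
  · nlinarith [sin_ge_sub_cube (by positivity : 0 ≤ d / 2)]
  · nlinarith [neg_one_le_sin (d / 2)]

theorem dist_angle_le_norm_sub_add_sq (z : V) {x y : V} (hx : 1 ≤ ‖x‖) (hy : 1 ≤ ‖y‖) :
    dist (angle z x) (angle z y) ≤ ‖x - y‖ + dist (angle z x) (angle z y) ^ 2 := by
  set d := dist (angle z x) (angle z y)
  have hd0 : 0 ≤ d := dist_nonneg
  have hd : d ≤ angle x y := abs_angle_sub_angle_le z x y
  have hsin : sin (d / 2) ≤ sin (angle x y / 2) :=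
    sin_le_sin_of_le_of_le_pi_div_two (by linarith [pi_pos]) (by linarith [angle_le_pi x y])
      (by linarith)
  linarith [sub_sq_le_two_mul_sin_half hd0, two_mul_sin_angle_div_two_le_norm_sub hx hy]

end Angle

/-- **Radial projection reduces length** (used in the Meeks–Yau exchange and round-off
argument in Theorem 3.3).  A continuous curve staying outside the open unit disk is at
least as long as the angle between its endpoints, i.e. the shorter arc of the unit
circle between their radial projections. -/
theorem length_ge_arccos_of_outside_unit_disk
    (σ : ℝ → EuclideanSpace ℝ (Fin 2))
    (hσ : ContinuousOn σ (Set.Icc 0 1))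
    (hout : ∀ t ∈ Set.Icc (0 : ℝ) 1, 1 ≤ ‖σ t‖) :
    ENNReal.ofReal
        (Real.arccos ⟪‖σ 0‖⁻¹ • σ 0, ‖σ 1‖⁻¹ • σ 1⟫)
      ≤ eVariationOn σ (Set.Icc 0 1) := by
  have hne : ∀ t ∈ Icc (0 : ℝ) 1, σ t ≠ 0 := fun t ht =>
    norm_pos_iff.1 (zero_lt_one.trans_le (hout t ht))
  have h0 : (0 : ℝ) ∈ Icc (0 : ℝ) 1 := left_mem_Icc.2 zero_le_one
  have hcont : ContinuousOn (fun t => angle (σ 0) (σ t)) (Icc 0 1) := fun t ht =>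
    (continuousAt_angle (x := (σ 0, σ t)) (hne 0 h0) (hne t ht)).comp_continuousWithinAt
      (f := fun s => (σ 0, σ s)) (continuousWithinAt_const.prodMk (hσ t ht))
  calc ENNReal.ofReal (arccos ⟪‖σ 0‖⁻¹ • σ 0, ‖σ 1‖⁻¹ • σ 1⟫)
      = edist (angle (σ 0) (σ 0)) (angle (σ 0) (σ 1)) := by
        rw [arccos_inner_inv_norm_smul, angle_self (hne 0 h0), edist_dist, dist_comm,
          Real.dist_eq, sub_zero, abs_of_nonneg (angle_nonneg _ _)]
    _ ≤ eVariationOn σ (Icc 0 1) :=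
        edist_le_eVariationOn_of_dist_le_dist_add_mul_sq zero_le_one zero_le_one hcont
          fun s hs t ht => by
            simpa [dist_eq_norm] using dist_angle_le_norm_sub_add_sq (σ 0) (hout s hs) (hout t ht)
end
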